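/- Let a₁,…,a_k be distinct nonzero complex numbers. Then −i ∑_{ℓ=1}^{k} (e^{−i a_ℓ}/a_ℓ) ∏_{j≠ℓ} a_j/(a_j − a_ℓ) + 1 + i ∑_{ℓ=1}^{k} 1/a_ℓ = ∑_{m=0}^{∞} ((−1)^m i^{k+m}/(m+k+1)!) h_m(a₁,…,a_k) ∏_{j=1}^{k} a_j, where the series converges absolutely. -/

import Mathlib

open Finset

/-- Complete homogeneous symmetric polynomial of degree `m` in `k` variables. -/
noncomputable def hsym (k m : ℕ) (a : Fin k → ℂ) : ℂ :=
  ∑ f ∈ Finset.Nat.antidiagonalTuple k m, ∏ j, a j ^ f j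

/-- Vandermonde determinant `∏_{i<j} (a j - a i)`. -/
noncomputable def vand (k : ℕ) (a : Fin k → ℂ) : ℂ :=
  ∏ p ∈ Finset.univ.filter (fun p : Fin k × Fin k => p.1 < p.2), (a p.2 - a p.1)

/-- Vandermonde determinant with the `ℓ`-th variable removed. -/
noncomputable def vandRem (k : ℕ) (a : Fin k → ℂ) (ℓ : Fin k) : ℂ :=
  ∏ p ∈ Finset.univ.filter
      (fun p : Fin k × Fin k => p.1 < p.2 ∧ p.1 ≠ ℓ ∧ p.2 ≠ ℓ), (a p.2 - a p.1)

/-- Elementary symmetric polynomial of degree `j` in `k` variables. -/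
noncomputable def esym (k j : ℕ) (a : Fin k → ℂ) : ℂ :=
  ∑ I ∈ Finset.powersetCard j (Finset.univ : Finset (Fin k)), ∏ i ∈ I, a i

/-!
Write `w_ℓ = ∏_{j ≠ ℓ} (a_ℓ - a_j)⁻¹` for the nodal weights of the nodes `a` and
`c_ℓ = ∏_{j ≠ ℓ} a_j / (a_j - a_ℓ)`, the Lagrange basis polynomial of `a_ℓ` evaluated at `0`.
The divided-difference identity `∑_ℓ a_ℓ ^ (m + k - 1) w_ℓ = h_m(a)`, with `0` for smaller
exponents, follows by induction on the number of nodes from partial fractions and the recursion of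
`h_m` in its first variable. Since `c_ℓ = -(∏_j -a_j) a_ℓ⁻¹ w_ℓ(a)` and also
`c_ℓ = a_ℓ ^ -(k - 1) w_ℓ(a⁻¹)`, it yields the moments `∑_ℓ a_ℓ ^ p c_ℓ` for all `p ≥ -1`:
`∑ 1/a_ℓ` for `p = -1`, `1` for `p = 0`, `0` for `0 < p < k`, and `-(∏_j -a_j) h_{p-k}(a)` for
`p ≥ k`. Expanding `e^{-i a_ℓ}` into its power series, the terms of order `0` and `1` cancel
`1 + i ∑ 1/a_ℓ`, those of order `2, …, k` vanish, and the remaining ones form the stated series,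
which converges absolutely because the exponential series does.
-/

open Lagrange

lemma hsym_zero_right (k : ℕ) (a : Fin k → ℂ) : hsym k 0 a = 1 := by
  simp [hsym, Finset.Nat.antidiagonalTuple_zero_right]

lemma hsym_fin_one (a : Fin 1 → ℂ) (m : ℕ) : hsym 1 m a = a 0 ^ m := by
  simp [hsym, Finset.Nat.antidiagonalTuple_one]

lemma hsym_cons (k m : ℕ) (x : ℂ) (t : Fin k → ℂ) :
    hsym (k + 1) m (Fin.cons x t) = ∑ j ∈ range (m + 1), x ^ j * hsym k (m - j) t := by
  simp only [hsym, mul_sum]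
  rw [sum_sigma']
  refine sum_nbij' (fun f => ⟨f 0, Fin.tail f⟩) (fun p => Fin.cons p.1 p.2) ?_ ?_ ?_ ?_ ?_
  · intro f hf
    simp only [Finset.Nat.mem_antidiagonalTuple, Fin.sum_univ_succ] at hf
    simp only [mem_sigma, mem_range, Finset.Nat.mem_antidiagonalTuple, Fin.tail]
    omega
  · rintro ⟨j, g⟩ hp
    simp only [mem_sigma, mem_range, Finset.Nat.mem_antidiagonalTuple] at hp
    simp only [Finset.Nat.mem_antidiagonalTuple, Fin.sum_univ_succ, Fin.cons_zero,
      Fin.cons_succ]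
    omega
  · intro f _; simp
  · intro p _; simp
  · intro f _; simp [Fin.prod_univ_succ, Fin.tail]

lemma hsym_one_right (k : ℕ) (a : Fin k → ℂ) : hsym k 1 a = ∑ j, a j := by
  induction k with
  | zero => simp [hsym]
  | succ k ih =>
    rw [← Fin.cons_self_tail a, hsym_cons, sum_range_succ, sum_range_one, ih, hsym_zero_right,
      Fin.sum_univ_succ]
    simp [Fin.tail, add_comm]

lemma nodalWeight_cons_zero {F : Type*} [Field F] {k : ℕ} (x : F) (t : Fin k → F) :
    nodalWeight univ (Fin.cons x t : Fin (k + 1) → F) 0 = ∏ i, (x - t i)⁻¹ := by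
  rw [nodalWeight, Fin.univ_succ, erase_cons, prod_map]
  rfl

lemma nodalWeight_cons_succ {F : Type*} [Field F] {k : ℕ} (x : F) (t : Fin k → F) (i : Fin k) :
    nodalWeight univ (Fin.cons x t : Fin (k + 1) → F) i.succ =
      (t i - x)⁻¹ * nodalWeight univ t i := by
  rw [nodalWeight, nodalWeight, Fin.univ_succ, erase_cons_of_ne _ (Fin.succ_ne_zero i).symm,
    prod_cons]
  erw [← map_erase, prod_map]
  rfl

lemma inv_prod_sub_eq_sum_nodalWeight {F ι : Type*} [Field F] [DecidableEq ι] {s : Finset ι}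
    {v : ι → F} (hvs : Set.InjOn v s) (hs : s.Nonempty) {x : F} (hx : ∀ i ∈ s, x ≠ v i) :
    (∏ i ∈ s, (x - v i))⁻¹ = ∑ i ∈ s, nodalWeight s v i * (x - v i)⁻¹ := by
  have h := eval_interpolate_not_at_node (1 : ι → F) hx
  rw [interpolate_one hvs hs, Polynomial.eval_one, eval_nodal] at h
  simp only [Pi.one_apply, mul_one] at h
  exact inv_eq_of_mul_eq_one_right h.symm

lemma sum_pow_mul_nodalWeight_of_lt {F ι : Type*} [Field F] [DecidableEq ι] {s : Finset ι}
    {v : ι → F} (hvs : Set.InjOn v s) {n : ℕ} (hn : n + 1 < #s) :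
    ∑ i ∈ s, v i ^ n * nodalWeight s v i = 0 := by
  have h := coeff_eq_sum hvs (P := Polynomial.X ^ n)
    (by rw [Polynomial.degree_X_pow]; exact_mod_cast (by omega : n < #s))
  rw [Polynomial.coeff_X_pow, if_neg (by omega)] at h
  simp only [Polynomial.eval_pow, Polynomial.eval_X, div_eq_mul_inv, ← prod_inv_distrib] at h
  exact h.symm

lemma sum_pow_mul_nodalWeight_cons {F : Type*} [Field F] {k : ℕ} {x : F} {t : Fin (k + 1) → F}
    (hxt : Function.Injective (Fin.cons x t : Fin (k + 2) → F)) (n : ℕ) :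
    ∑ ℓ, (Fin.cons x t : Fin (k + 2) → F) ℓ ^ n * nodalWeight univ (Fin.cons x t) ℓ =
      ∑ r ∈ range n, x ^ (n - 1 - r) * ∑ i, t i ^ r * nodalWeight univ t i := by
  obtain ⟨hx, ht⟩ := Fin.cons_injective_iff.mp hxt
  have hsub : ∀ i, x - t i ≠ 0 := fun i h => hx ⟨i, (sub_eq_zero.mp h).symm⟩
  have hpf := inv_prod_sub_eq_sum_nodalWeight ht.injOn univ_nonempty
    fun i _ => sub_ne_zero.mp (hsub i)
  have hgeom : ∀ i, t i ^ n * (t i - x)⁻¹ =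
      ∑ r ∈ range n, t i ^ r * x ^ (n - 1 - r) - x ^ n * (x - t i)⁻¹ := by
    intro i
    have hne : t i - x ≠ 0 := by rw [← neg_sub]; exact neg_ne_zero.mpr (hsub i)
    rw [← sub_add_cancel (t i ^ n) (x ^ n), ← geom_sum₂_mul, add_mul, mul_inv_cancel_right₀ hne,
      ← neg_sub x, inv_neg]
    ring
  -- the contribution `x ^ n ∏ (x - t i)⁻¹` of the node `x` cancels the remainders of `hgeom` by `hpf`
  rw [Fin.sum_univ_succ]
  simp only [Fin.cons_zero, Fin.cons_succ, nodalWeight_cons_zero, nodalWeight_cons_succ,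
    ← mul_assoc, hgeom, sub_mul, sum_sub_distrib, sum_mul, prod_inv_distrib, hpf, mul_sum]
  rw [sum_comm]
  simp only [mul_right_comm (x ^ n) (nodalWeight _ _ _), mul_assoc, add_sub_cancel,
    mul_left_comm (t _ ^ _)]

theorem sum_pow_add_mul_nodalWeight {k : ℕ} (a : Fin (k + 1) → ℂ) (hinj : Function.Injective a)
    (m : ℕ) : ∑ ℓ, a ℓ ^ (m + k) * nodalWeight univ a ℓ = hsym (k + 1) m a := by
  induction k generalizing m with
  | zero => simp [nodalWeight, hsym_fin_one]
  | succ k ih =>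
    obtain ⟨x, t, rfl⟩ : ∃ x t, a = Fin.cons x t := ⟨a 0, Fin.tail a, (Fin.cons_self_tail a).symm⟩
    have ht := (Fin.cons_injective_iff.mp hinj).2
    have hlow : ∀ r ∈ range k,
        x ^ (k + (m + 1) - 1 - r) * ∑ i, t i ^ r * nodalWeight univ t i = 0 := fun r hr => by
      rw [sum_pow_mul_nodalWeight_of_lt ht.injOn (by simpa using hr), mul_zero]
    rw [sum_pow_mul_nodalWeight_cons hinj, hsym_cons, show m + (k + 1) = k + (m + 1) by ring,
      sum_range_add, sum_eq_zero hlow, zero_add, ← sum_range_reflect]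
    refine sum_congr rfl fun j hj => ?_
    rw [mem_range] at hj
    rw [show k + (m + 1) - 1 - (k + (m + 1 - 1 - j)) = j by omega,
      show k + (m + 1 - 1 - j) = (m - j) + k by omega, ih t ht]

lemma prod_div_sub_eq_prod_neg_mul_nodalWeight {F ι : Type*} [Field F] [DecidableEq ι]
    (s : Finset ι) (v : ι → F) (i : ι) :
    ∏ j ∈ s.erase i, v j / (v j - v i) = (∏ j ∈ s.erase i, -v j) * nodalWeight s v i := by
  rw [nodalWeight, ← prod_mul_distrib]
  refine prod_congr rfl fun j _ => ?_
  rw [div_eq_mul_inv, ← neg_sub, inv_neg, mul_neg, neg_mul]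

lemma prod_div_sub_eq_inv_pow_mul_nodalWeight_inv {F ι : Type*} [Field F] [DecidableEq ι]
    {s : Finset ι} {v : ι → F} (hv : ∀ j ∈ s, v j ≠ 0) (i : ι) (hi : i ∈ s) :
    ∏ j ∈ s.erase i, v j / (v j - v i) = (v i)⁻¹ ^ #(s.erase i) * nodalWeight s v⁻¹ i := by
  rw [nodalWeight, ← prod_const, ← prod_mul_distrib]
  refine prod_congr rfl fun j hj => ?_
  have hvi := hv i hi
  have hvj := hv j (mem_of_mem_erase hj)
  simp only [Pi.inv_apply]
  field_simp

lemma sum_pow_succ_mul_prod_div_sub {F ι : Type*} [Field F] [Fintype ι] [DecidableEq ι]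
    (v : ι → F) (n : ℕ) :
    ∑ i, v i ^ (n + 1) * ∏ j ∈ univ.erase i, v j / (v j - v i) =
      -(∏ j, -v j) * ∑ i, v i ^ n * nodalWeight univ v i := by
  rw [mul_sum]
  refine sum_congr rfl fun i _ => ?_
  rw [prod_div_sub_eq_prod_neg_mul_nodalWeight, ← mul_prod_erase univ (fun j => -v j) (mem_univ i)]
  ring

theorem sum_inv_pow_mul_prod_div_sub {k : ℕ} {a : Fin (k + 1) → ℂ}
    (hinj : Function.Injective a) (ha : ∀ j, a j ≠ 0) (m : ℕ) :
    ∑ ℓ, (a ℓ)⁻¹ ^ m * ∏ j ∈ univ.erase ℓ, a j / (a j - a ℓ) = hsym (k + 1) m a⁻¹ := by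
  rw [← sum_pow_add_mul_nodalWeight a⁻¹ (inv_injective.comp hinj)]
  refine sum_congr rfl fun ℓ _ => ?_
  rw [prod_div_sub_eq_inv_pow_mul_nodalWeight_inv (fun j _ => ha j) ℓ (mem_univ ℓ),
    card_erase_of_mem (mem_univ ℓ), card_univ, Fintype.card_fin, Nat.add_sub_cancel, ← mul_assoc,
    ← pow_add, Pi.inv_apply]

section ExpSeries

open Nat

variable {ι : Type*} [Fintype ι] (z : ℂ) (v w : ι → ℂ)

lemma exp_series_mul_sum_eq (n : ℕ) :
    z ^ n / n ! * ∑ i, v i ^ n * w i = ∑ i, (z * v i) ^ n / n ! * w i := by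
  rw [mul_sum]
  exact sum_congr rfl fun i _ => by ring

lemma hasSum_exp_series_mul_sum :
    HasSum (fun n => z ^ n / n ! * ∑ i, v i ^ n * w i) (∑ i, Complex.exp (z * v i) * w i) := by
  simp only [exp_series_mul_sum_eq, Complex.exp_eq_exp_ℂ]
  exact hasSum_sum fun i _ => (NormedSpace.expSeries_div_hasSum_exp (z * v i)).mul_right (w i)

lemma summable_norm_exp_series_mul_sum :
    Summable fun n => ‖z ^ n / n ! * ∑ i, v i ^ n * w i‖ := by
  simp only [exp_series_mul_sum_eq]
  refine .of_nonneg_of_le (fun _ => norm_nonneg _)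
    (fun n => (norm_sum_le _ _).trans (sum_le_sum fun i _ => norm_mul_le _ _))
    (summable_sum (s := univ) fun i _ =>
      (NormedSpace.norm_expSeries_div_summable (z * v i)).mul_right ‖w i‖)

end ExpSeries

noncomputable def hsymSeries (k : ℕ) (a : Fin k → ℂ) (m : ℕ) : ℂ :=
  ((-1 : ℂ) ^ m * Complex.I ^ (k + m) / (Nat.factorial (m + k + 1) : ℂ)) * hsym k m a * ∏ j, a j

lemma hsymSeries_fin_zero (a : Fin 0 → ℂ) (m : ℕ) :
    hsymSeries 0 a m = if m = 0 then 1 else 0 := by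
  cases m <;> simp [hsymSeries, hsym, Finset.Nat.antidiagonalTuple_zero_succ]

section ExpansionOfTheLagrangeSum

open Complex Nat

noncomputable def lagrangeExpCoeff {k : ℕ} (a : Fin k → ℂ) (n : ℕ) : ℂ :=
  (-I) ^ n / n ! * ∑ ℓ, a ℓ ^ n * ((a ℓ)⁻¹ * ∏ j ∈ univ.erase ℓ, a j / (a j - a ℓ))

variable {K : ℕ} {a : Fin (K + 1) → ℂ}

lemma lagrangeExpCoeff_zero (ha : ∀ ℓ, a ℓ ≠ 0) (hdist : Function.Injective a) :
    lagrangeExpCoeff a 0 = ∑ ℓ, (a ℓ)⁻¹ := by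
  simpa [lagrangeExpCoeff, hsym_one_right] using sum_inv_pow_mul_prod_div_sub hdist ha 1

lemma lagrangeExpCoeff_one (ha : ∀ ℓ, a ℓ ≠ 0) (hdist : Function.Injective a) :
    lagrangeExpCoeff a 1 = -I := by
  have h := sum_inv_pow_mul_prod_div_sub hdist ha 0
  simp only [pow_zero, one_mul, hsym_zero_right] at h
  simp only [lagrangeExpCoeff, pow_one, factorial_one, cast_one, div_one,
    mul_inv_cancel_left₀ (ha _), h, mul_one]

lemma lagrangeExpCoeff_add_two (ha : ∀ ℓ, a ℓ ≠ 0) (n : ℕ) :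
    lagrangeExpCoeff a (n + 2) =
      (-I) ^ (n + 2) / (n + 2)! * (-(∏ j, -a j) * ∑ ℓ, a ℓ ^ n * nodalWeight univ a ℓ) := by
  rw [lagrangeExpCoeff, ← sum_pow_succ_mul_prod_div_sub a n]
  congr 1
  exact sum_congr rfl fun ℓ _ => by rw [pow_succ, mul_assoc, mul_inv_cancel_left₀ (ha ℓ)]

lemma sum_range_lagrangeExpCoeff (ha : ∀ ℓ, a ℓ ≠ 0) (hdist : Function.Injective a) :
    ∑ n ∈ range (K + 2), lagrangeExpCoeff a n = ∑ ℓ, (a ℓ)⁻¹ - I := by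
  rw [sum_range_succ', sum_range_succ', sum_eq_zero fun n hn => ?_, lagrangeExpCoeff_zero ha hdist,
    lagrangeExpCoeff_one ha hdist]
  · ring
  · rw [lagrangeExpCoeff_add_two ha, sum_pow_mul_nodalWeight_of_lt hdist.injOn (by simpa using hn),
      mul_zero, mul_zero]

lemma hsymSeries_succ_eq (ha : ∀ ℓ, a ℓ ≠ 0) (hdist : Function.Injective a) (m : ℕ) :
    hsymSeries (K + 1) a m = -I * lagrangeExpCoeff a (m + (K + 2)) := by
  rw [show m + (K + 2) = m + K + 2 by ring, lagrangeExpCoeff_add_two ha,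
    sum_pow_add_mul_nodalWeight a hdist m, hsymSeries, prod_neg, Finset.card_univ,
    Fintype.card_fin, show m + (K + 1) + 1 = m + K + 2 by ring, neg_pow I]
  ring_nf
  rw [I_pow_three, pow_mul', neg_one_sq, one_pow]
  ring

theorem hasSum_hsymSeries_succ (ha : ∀ ℓ, a ℓ ≠ 0) (hdist : Function.Injective a) :
    Summable (fun m => ‖hsymSeries (K + 1) a m‖) ∧
    HasSum (hsymSeries (K + 1) a)
      (-I * ∑ ℓ, (exp (-I * a ℓ) / a ℓ) * ∏ j ∈ univ.erase ℓ, a j / (a j - a ℓ) + 1 +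
        I * ∑ ℓ, (a ℓ)⁻¹) := by
  set w : Fin (K + 1) → ℂ := fun ℓ => (a ℓ)⁻¹ * ∏ j ∈ univ.erase ℓ, a j / (a j - a ℓ)
  rw [funext (hsymSeries_succ_eq ha hdist)]
  refine ⟨?_, ?_⟩
  · refine ((summable_nat_add_iff (K + 2)).mpr (summable_norm_exp_series_mul_sum (-I) a w)).congr
      fun m => ?_
    rw [norm_mul (-I), norm_neg, norm_I, one_mul, lagrangeExpCoeff]
  · have h := (hasSum_nat_add_iff' (K + 2)).mpr (hasSum_exp_series_mul_sum (-I) a w)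
    change HasSum (fun n => lagrangeExpCoeff a (n + (K + 2)))
      (_ - ∑ n ∈ range (K + 2), lagrangeExpCoeff a n) at h
    rw [sum_range_lagrangeExpCoeff ha hdist] at h
    convert h.mul_left (-I) using 1
    · rfl
    · simp only [w, div_eq_mul_inv, mul_assoc]
      linear_combination I_sq

end ExpansionOfTheLagrangeSum

theorem stmt16 (k : ℕ) (a : Fin k → ℂ) (ha : ∀ ℓ, a ℓ ≠ 0)
    (hdist : Function.Injective a) :
    Summable (fun m : ℕ =>
      ‖((-1 : ℂ) ^ m * Complex.I ^ (k + m) / (Nat.factorial (m + k + 1) : ℂ)) *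
        hsym k m a * ∏ j : Fin k, a j‖) ∧
    -Complex.I * ∑ ℓ : Fin k, (Complex.exp (-Complex.I * a ℓ) / a ℓ) *
        ∏ j ∈ Finset.univ.erase ℓ, a j / (a j - a ℓ) + 1 +
      Complex.I * ∑ ℓ : Fin k, (a ℓ)⁻¹ =
    ∑' m : ℕ,
      ((-1 : ℂ) ^ m * Complex.I ^ (k + m) / (Nat.factorial (m + k + 1) : ℂ)) *
        hsym k m a * ∏ j : Fin k, a j := by
  change Summable (fun m => ‖hsymSeries k a m‖) ∧ _ = ∑' m, hsymSeries k a m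
  cases k with
  | zero =>
    simpa [hsymSeries_fin_zero, apply_ite] using (hasSum_ite_eq 0 (1 : ℝ)).summable
  | succ K =>
    obtain ⟨hsum, hhas⟩ := hasSum_hsymSeries_succ ha hdist
    exact ⟨hsum, hhas.tsum_eq.symm⟩
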